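/- arXiv:2112.12225 — 3 statements merged into one kernel-verified Lean document; each statement's English description precedes it below -/
import Mathlib

section
/- Let p ∈ (1,2] and δ ∈ [0,∞), and set ω := ω_{p,δ}. Then ω(t) ≤ ω'(t)·t ≤ 2^{p+1}·ω(t) for all t ≥ 0, and (p−1)·ω'(t) ≤ ω''(t)·t ≤ ω'(t) for all t > 0. In particular ω is a balanced N-function with characteristics (p−1, 1) and satisfies the Δ₂-condition with a constant depending only on p, and its complementary function ω* is a balanced N-function with characteristics (1, (p−1)^{−1}) and satisfies the Δ₂-condition with a constant depending only on p. -/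
open Real Set MeasureTheory Filter Matrix

noncomputable section

/-- The N-function `omega_{p,delta}(t) = int_0^t (delta+s)^(p-2) s ds`. -/
def omg (p δ : ℝ) (t : ℝ) : ℝ := ∫ s in (0:ℝ)..t, (δ + s) ^ (p - 2) * s

/-- The `A`-approximation of a function `φ`: it equals `φ` on `[0,A]` and is the
second-order Taylor polynomial of `φ` at `A` for `t > A`. -/
def approxA (φ : ℝ → ℝ) (A : ℝ) (t : ℝ) : ℝ :=
  if t ≤ A then φ t
  else (1/2) * deriv (deriv φ) A * t ^ 2 + (deriv φ A - deriv (deriv φ) A * A) * t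
    + (φ A - deriv φ A * A + (1/2) * deriv (deriv φ) A * A ^ 2)

/-- `φ` is a regular N-function: continuous, convex, positive for `t > 0`,
`φ(t)/t → 0` as `t → 0⁺`, `φ(t)/t → ∞` as `t → ∞`, `C¹` on `[0,∞)`, `C²` on `(0,∞)`,
with `φ'' > 0` on `(0,∞)`. -/
structure IsRegularNFunction (φ : ℝ → ℝ) : Prop where
  continuousOn : ContinuousOn φ (Set.Ici 0)
  convexOn : ConvexOn ℝ (Set.Ici 0) φ
  pos : ∀ t : ℝ, 0 < t → 0 < φ t
  tendsto_zero : Filter.Tendsto (fun t => φ t / t) (nhdsWithin 0 (Set.Ioi 0)) (nhds 0)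
  tendsto_atTop : Filter.Tendsto (fun t => φ t / t) Filter.atTop Filter.atTop
  diffAt : ∀ t : ℝ, 0 < t → DifferentiableAt ℝ φ t
  deriv_continuousOn : ContinuousOn (deriv φ) (Set.Ici 0)
  diffAt2 : ∀ t : ℝ, 0 < t → DifferentiableAt ℝ (deriv φ) t
  deriv2_continuousOn : ContinuousOn (deriv (deriv φ)) (Set.Ioi 0)
  deriv2_pos : ∀ t : ℝ, 0 < t → 0 < deriv (deriv φ) t

/-- `φ` is a balanced N-function with characteristics `(γ₁, γ₂)`:
`γ₁ φ'(t) ≤ t φ''(t) ≤ γ₂ φ'(t)` for all `t > 0`. -/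
structure IsBalanced (φ : ℝ → ℝ) (γ₁ γ₂ : ℝ) : Prop where
  regular : IsRegularNFunction φ
  gamma1_mem : γ₁ ∈ Set.Ioc (0:ℝ) 1
  gamma2_ge : 1 ≤ γ₂
  lower : ∀ t : ℝ, 0 < t → γ₁ * deriv φ t ≤ t * deriv (deriv φ) t
  upper : ∀ t : ℝ, 0 < t → t * deriv (deriv φ) t ≤ γ₂ * deriv φ t

/-- `ψ` satisfies the Δ₂-condition with constant `K`. -/
def SatisfiesDelta2 (ψ : ℝ → ℝ) (K : ℝ) : Prop :=
  2 ≤ K ∧ ∀ t : ℝ, 0 ≤ t → ψ (2 * t) ≤ K * ψ t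

/-- The complementary N-function `φ*(t) = ∫₀ᵗ (φ')⁻¹(s) ds`, where `(φ')⁻¹` is the
inverse on `[0,∞)` of the (strictly increasing) derivative `φ'`. -/
def conj (φ : ℝ → ℝ) (t : ℝ) : ℝ :=
  ∫ s in (0:ℝ)..t, Function.invFunOn (deriv φ) (Set.Ici 0) s

/-!
`ω` is the primitive of the increasing function `f(t) = (δ+t)^(p-2) t`, whose logarithmic
derivative satisfies `t f'(t) / f(t) = ((p-1)t + δ)/(δ + t) ∈ [p-1, 1]`. The remaining claims hold
for primitives `F` of increasing `f` in general: `f(t/2) t/2 ≤ F(t) ≤ f(t) t`, so a doubling bound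
`f(2t) ≤ c f(t)` yields the Δ₂-condition for `F`. The complementary function is the primitive of
`g = (ω')⁻¹`; at `t = ω'(s)` the inverse function theorem gives `(ω*)'(t) = s` and
`t (ω*)''(t) = ω'(s)/ω''(s)`, which exchanges the characteristics `(γ₁, γ₂) ↦ (γ₂⁻¹, γ₁⁻¹)`, and
`ω'(2^(1/(p-1)) s) ≥ 2 ω'(s)` is a doubling bound for `g`.
-/

open Topology

section Primitive

variable {f f' : ℝ → ℝ} {t : ℝ}

theorem intervalIntegrable_of_monotoneOn_Ici (hf : MonotoneOn f (Ici 0)) {a b : ℝ}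
    (ha : 0 ≤ a) (hb : 0 ≤ b) : IntervalIntegrable f volume a b :=
  (hf.mono fun _ hx => (le_min ha hb).trans hx.1).intervalIntegrable

theorem integral_le_mul_of_monotoneOn (hf : MonotoneOn f (Ici 0)) (ht : 0 ≤ t) :
    ∫ s in (0:ℝ)..t, f s ≤ f t * t :=
  calc ∫ s in (0:ℝ)..t, f s ≤ ∫ _ in (0:ℝ)..t, f t :=
        intervalIntegral.integral_mono_on ht (intervalIntegrable_of_monotoneOn_Ici hf le_rfl ht)
          intervalIntegrable_const fun _ hs => hf hs.1 ht hs.2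
    _ = f t * t := by simp [mul_comm]

theorem integral_nonneg_of_monotoneOn (hf : MonotoneOn f (Ici 0)) (hf0 : 0 ≤ f 0)
    (ht : 0 ≤ t) : 0 ≤ ∫ s in (0:ℝ)..t, f s :=
  intervalIntegral.integral_nonneg ht fun _ hs => hf0.trans (hf self_mem_Ici hs.1 hs.1)

theorem mul_half_le_integral_of_monotoneOn (hf : MonotoneOn f (Ici 0)) (hf0 : 0 ≤ f 0)
    (ht : 0 ≤ t) : f (t / 2) * (t / 2) ≤ ∫ s in (0:ℝ)..t, f s := by
  have ht2 : 0 ≤ t / 2 := by linarith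
  have hint₁ := intervalIntegrable_of_monotoneOn_Ici hf le_rfl ht2
  have hint₂ := intervalIntegrable_of_monotoneOn_Ici hf ht2 ht
  have hsecond : f (t / 2) * (t / 2) ≤ ∫ s in (t / 2)..t, f s :=
    calc f (t / 2) * (t / 2) = ∫ _ in (t / 2)..t, f (t / 2) := by
          rw [intervalIntegral.integral_const, smul_eq_mul]; ring
      _ ≤ ∫ s in (t / 2)..t, f s :=
        intervalIntegral.integral_mono_on (by linarith) intervalIntegrable_const hint₂
          fun _ hs => hf ht2 (ht2.trans hs.1) hs.1
  rw [← intervalIntegral.integral_add_adjacent_intervals hint₁ hint₂]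
  linarith [integral_nonneg_of_monotoneOn hf hf0 ht2]

theorem integral_pos_of_strictMonoOn (hf : StrictMonoOn f (Ici 0)) (hf0 : 0 ≤ f 0)
    (ht : 0 < t) : 0 < ∫ s in (0:ℝ)..t, f s := by
  have hpos : 0 < f (t / 2) :=
    hf0.trans_lt (hf self_mem_Ici (mem_Ici.2 (by positivity)) (by positivity))
  exact (mul_pos hpos (by positivity)).trans_le
    (mul_half_le_integral_of_monotoneOn hf.monotoneOn hf0 ht.le)

theorem mul_le_integral_of_doubling (hf : MonotoneOn f (Ici 0)) (hf0 : 0 ≤ f 0) {c : ℝ}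
    (hc0 : 0 ≤ c) (hc : ∀ u, 0 ≤ u → f (2 * u) ≤ c * f u) (ht : 0 ≤ t) :
    f t * t ≤ 2 * c * ∫ s in (0:ℝ)..t, f s :=
  calc f t * t = f (2 * (t / 2)) * t := by ring_nf
    _ ≤ c * f (t / 2) * t := by gcongr; exact hc _ (by linarith)
    _ = 2 * c * (f (t / 2) * (t / 2)) := by ring
    _ ≤ 2 * c * ∫ s in (0:ℝ)..t, f s :=
      mul_le_mul_of_nonneg_left (mul_half_le_integral_of_monotoneOn hf hf0 ht) (by positivity)

theorem satisfiesDelta2_integral_of_doubling (hf : MonotoneOn f (Ici 0)) (hf0 : 0 ≤ f 0)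
    {c : ℝ} (hc1 : 1 ≤ c) (hc : ∀ u, 0 ≤ u → f (2 * u) ≤ c * f u) :
    SatisfiesDelta2 (fun t => ∫ s in (0:ℝ)..t, f s) (4 * c ^ 2) := by
  refine ⟨by nlinarith, fun t ht => ?_⟩
  have hc0 : 0 ≤ c := by linarith
  calc ∫ s in (0:ℝ)..2 * t, f s ≤ f (2 * t) * (2 * t) :=
        integral_le_mul_of_monotoneOn hf (by linarith)
    _ ≤ c * f t * (2 * t) := by gcongr; exact hc t ht
    _ = 2 * c * (f t * t) := by ring
    _ ≤ 2 * c * (2 * c * ∫ s in (0:ℝ)..t, f s) :=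
      mul_le_mul_of_nonneg_left (mul_le_integral_of_doubling hf hf0 hc0 hc ht) (by positivity)
    _ = 4 * c ^ 2 * ∫ s in (0:ℝ)..t, f s := by ring

theorem hasDerivAt_integral_of_continuousOn (hf : ContinuousOn f (Ici 0)) (ht : 0 < t) :
    HasDerivAt (fun u => ∫ s in (0:ℝ)..u, f s) (f t) t :=
  intervalIntegral.integral_hasDerivAt_right
    ((hf.mono Icc_subset_Ici_self).intervalIntegrable_of_Icc ht.le)
    ((hf.mono Ioi_subset_Ici_self).stronglyMeasurableAtFilter isOpen_Ioi t ht)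
    (hf.continuousAt (Ici_mem_nhds ht))

theorem hasDerivAt_deriv_integral (hf : ContinuousOn f (Ici 0)) (ht : 0 < t) {a : ℝ}
    (hderiv : HasDerivAt f a t) : HasDerivAt (deriv fun u => ∫ s in (0:ℝ)..u, f s) a t :=
  hderiv.congr_of_eventuallyEq <| eventually_of_mem (Ioi_mem_nhds ht) fun _ hu =>
    (hasDerivAt_integral_of_continuousOn hf hu).deriv

theorem continuousOn_integral (hf : ContinuousOn f (Ici 0)) :
    ContinuousOn (fun u => ∫ s in (0:ℝ)..u, f s) (Ici 0) := by
  intro t (ht : 0 ≤ t)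
  have hIcc : Icc 0 (t + 1) ∈ 𝓝[Ici 0] t := by
    rw [← Ici_inter_Iic]
    exact inter_mem_nhdsWithin _ (Iic_mem_nhds (by linarith))
  have hint : IntervalIntegrable f volume 0 (t + 1) :=
    (hf.mono Icc_subset_Ici_self).intervalIntegrable_of_Icc (by linarith)
  have hcont := intervalIntegral.continuousOn_primitive_interval' hint left_mem_uIcc
  rw [uIcc_of_le (by linarith)] at hcont
  exact (hcont t ⟨ht, by linarith⟩).mono_of_mem_nhdsWithin hIcc

theorem tendsto_integral_div_nhdsGT_zero (hf : ContinuousOn f (Ici 0))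
    (hmono : MonotoneOn f (Ici 0)) (hf0 : f 0 = 0) :
    Tendsto (fun t => (∫ s in (0:ℝ)..t, f s) / t) (𝓝[>] 0) (𝓝 0) := by
  have hlim : Tendsto f (𝓝[>] 0) (𝓝 0) := by
    have := (hf 0 self_mem_Ici).tendsto
    rw [hf0] at this
    exact this.mono_left (nhdsWithin_mono _ Ioi_subset_Ici_self)
  refine tendsto_of_tendsto_of_tendsto_of_le_of_le' tendsto_const_nhds hlim ?_ ?_ <;>
    filter_upwards [self_mem_nhdsWithin] with t (ht : 0 < t)
  · exact div_nonneg (integral_nonneg_of_monotoneOn hmono hf0.ge ht.le) ht.le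
  · exact (div_le_iff₀ ht).2 (integral_le_mul_of_monotoneOn hmono ht.le)

theorem deriv_integral_of_monotoneOn (hf : ContinuousOn f (Ici 0))
    (hmono : MonotoneOn f (Ici 0)) (hf0 : f 0 = 0) (ht : 0 ≤ t) :
    deriv (fun u => ∫ s in (0:ℝ)..u, f s) t = f t := by
  rcases ht.eq_or_lt with rfl | ht
  · rw [hf0]
    -- only the right slopes at `0` are controlled; without a two-sided derivative, `deriv` is `0`
    by_cases hd : DifferentiableAt ℝ (fun u => ∫ s in (0:ℝ)..u, f s) 0
    · refine tendsto_nhds_unique ((hasDerivAt_iff_tendsto_slope.1 hd.hasDerivAt).mono_left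
        (nhdsWithin_mono (0:ℝ) fun x (hx : x ∈ Ioi 0) => ne_of_gt hx)) ?_
      refine (tendsto_integral_div_nhdsGT_zero hf hmono hf0).congr fun u => ?_
      simp [slope_def_field]
    · exact deriv_zero_of_not_differentiableAt hd
  · exact (hasDerivAt_integral_of_continuousOn hf ht).deriv

theorem convexOn_integral (hf : ContinuousOn f (Ici 0)) (hmono : MonotoneOn f (Ici 0)) :
    ConvexOn ℝ (Ici 0) (fun u => ∫ s in (0:ℝ)..u, f s) := by
  refine MonotoneOn.convexOn_of_deriv (convex_Ici 0) (continuousOn_integral hf) ?_ ?_ <;>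
    rw [interior_Ici]
  · exact fun t ht => (hasDerivAt_integral_of_continuousOn hf ht).differentiableAt
      |>.differentiableWithinAt
  · exact (hmono.mono Ioi_subset_Ici_self).congr fun t ht =>
      (hasDerivAt_integral_of_continuousOn hf ht).deriv.symm

theorem tendsto_integral_div_atTop (hmono : MonotoneOn f (Ici 0)) (hf0 : 0 ≤ f 0)
    (htop : Tendsto f atTop atTop) :
    Tendsto (fun t => (∫ s in (0:ℝ)..t, f s) / t) atTop atTop := by
  refine tendsto_atTop_mono' _ ?_
    ((htop.comp (tendsto_id.atTop_div_const two_pos)).atTop_div_const two_pos)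
  filter_upwards [eventually_gt_atTop 0] with t ht
  rw [le_div_iff₀ ht]
  calc (f ∘ fun u => u / 2) t / 2 * t = f (t / 2) * (t / 2) := by rw [Function.comp_apply]; ring
    _ ≤ _ := mul_half_le_integral_of_monotoneOn hmono hf0 ht.le

theorem strictMonoOn_Ici_of_hasDerivAt_pos (hf : ContinuousOn f (Ici 0))
    (hderiv : ∀ t, 0 < t → HasDerivAt f (f' t) t) (hpos : ∀ t, 0 < t → 0 < f' t) :
    StrictMonoOn f (Ici 0) :=
  strictMonoOn_of_deriv_pos (convex_Ici 0) hf fun t ht => by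
    rw [interior_Ici] at ht
    rw [(hderiv t ht).deriv]
    exact hpos t ht

theorem isRegularNFunction_integral (hf : ContinuousOn f (Ici 0)) (hf0 : f 0 = 0)
    (htop : Tendsto f atTop atTop) (hderiv : ∀ t, 0 < t → HasDerivAt f (f' t) t)
    (hf'cont : ContinuousOn f' (Ioi 0)) (hf'pos : ∀ t, 0 < t → 0 < f' t) :
    IsRegularNFunction (fun t => ∫ s in (0:ℝ)..t, f s) := by
  have hmono := strictMonoOn_Ici_of_hasDerivAt_pos hf hderiv hf'pos
  have hderiv2 (t : ℝ) (ht : 0 < t) := hasDerivAt_deriv_integral hf ht (hderiv t ht)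
  exact
  { continuousOn := continuousOn_integral hf
    convexOn := convexOn_integral hf hmono.monotoneOn
    pos := fun t => integral_pos_of_strictMonoOn hmono hf0.ge
    tendsto_zero := tendsto_integral_div_nhdsGT_zero hf hmono.monotoneOn hf0
    tendsto_atTop := tendsto_integral_div_atTop hmono.monotoneOn hf0.ge htop
    diffAt := fun t ht => (hasDerivAt_integral_of_continuousOn hf ht).differentiableAt
    deriv_continuousOn := hf.congr fun t ht =>
      deriv_integral_of_monotoneOn hf hmono.monotoneOn hf0 ht
    diffAt2 := fun t ht => (hderiv2 t ht).differentiableAt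
    deriv2_continuousOn := hf'cont.congr fun t ht => (hderiv2 t ht).deriv
    deriv2_pos := fun t ht => (hderiv2 t ht).deriv ▸ hf'pos t ht }

end Primitive

section Inverse

variable {f : ℝ → ℝ} {t : ℝ}

theorem bijOn_Ici_of_strictMonoOn (hf : ContinuousOn f (Ici 0)) (hmono : StrictMonoOn f (Ici 0))
    (hf0 : f 0 = 0) (htop : Tendsto f atTop atTop) : BijOn f (Ici 0) (Ici 0) := by
  refine ⟨fun x hx => hf0 ▸ hmono.monotoneOn self_mem_Ici hx hx, hmono.injOn, fun y hy => ?_⟩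
  obtain ⟨b, hyb, hb⟩ := ((htop.eventually_ge_atTop y).and (eventually_ge_atTop 0)).exists
  obtain ⟨a, ha, rfl⟩ := intermediate_value_Icc hb (hf.mono Icc_subset_Ici_self)
    ⟨by rw [hf0]; exact hy, hyb⟩
  exact ⟨a, ha.1, rfl⟩

theorem invFunOn_Ici_pos (hf : BijOn f (Ici 0) (Ici 0)) (hf0 : f 0 = 0) (ht : 0 < t) :
    0 < Function.invFunOn f (Ici 0) t := by
  have hmem : Function.invFunOn f (Ici 0) t ∈ Ici 0 := hf.surjOn.mapsTo_invFunOn ht.le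
  refine hmem.lt_of_ne' fun h => ht.ne' ?_
  rw [← hf.invOn_invFunOn.2 ht.le, h, hf0]

theorem monotoneOn_invFunOn_Ici (hf : BijOn f (Ici 0) (Ici 0)) (hmono : MonotoneOn f (Ici 0)) :
    MonotoneOn (Function.invFunOn f (Ici 0)) (Ici 0) :=
  Function.monotoneOn_of_rightInvOn_of_mapsTo hmono hf.invOn_invFunOn.2
    hf.surjOn.mapsTo_invFunOn

theorem invFunOn_Ici_zero (hf : BijOn f (Ici 0) (Ici 0)) (hf0 : f 0 = 0) :
    Function.invFunOn f (Ici 0) 0 = 0 := by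
  simpa [hf0] using hf.invOn_invFunOn.1 (self_mem_Ici (a := (0:ℝ)))

theorem continuousOn_invFunOn_Ici (hf : BijOn f (Ici 0) (Ici 0))
    (hmono : MonotoneOn f (Ici 0)) (hf0 : f 0 = 0) :
    ContinuousOn (Function.invFunOn f (Ici 0)) (Ici 0) := by
  have hginv := monotoneOn_invFunOn_Ici hf hmono
  have himage : Function.invFunOn f (Ici 0) '' Ici 0 = Ici 0 :=
    (hf.invOn_invFunOn.symm.bijOn hf.surjOn.mapsTo_invFunOn hf.mapsTo).image_eq
  intro t (ht : 0 ≤ t)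
  rcases ht.eq_or_lt with rfl | ht
  · refine continuousWithinAt_right_of_monotoneOn_of_image_mem_nhdsWithin hginv
      self_mem_nhdsWithin ?_
    rw [himage, invFunOn_Ici_zero hf hf0]
    exact self_mem_nhdsWithin
  · refine (continuousAt_of_monotoneOn_of_image_mem_nhds hginv (Ici_mem_nhds ht) ?_)
      |>.continuousWithinAt
    rw [himage]
    exact Ici_mem_nhds (invFunOn_Ici_pos hf hf0 ht)

theorem tendsto_invFunOn_Ici_atTop (hf : BijOn f (Ici 0) (Ici 0))
    (hmono : MonotoneOn f (Ici 0)) :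
    Tendsto (Function.invFunOn f (Ici 0)) atTop atTop := by
  refine tendsto_atTop_atTop.2 fun M => ⟨f (max M 0), fun y hy => ?_⟩
  have hM : max M 0 ∈ Ici 0 := le_max_right M 0
  calc M ≤ max M 0 := le_max_left M 0
    _ = Function.invFunOn f (Ici 0) (f (max M 0)) := (hf.invOn_invFunOn.1 hM).symm
    _ ≤ Function.invFunOn f (Ici 0) y :=
      monotoneOn_invFunOn_Ici hf hmono (hf.mapsTo hM) ((hf.mapsTo hM).trans hy) hy

theorem hasDerivAt_invFunOn_Ici (hf : BijOn f (Ici 0) (Ici 0)) (hmono : MonotoneOn f (Ici 0))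
    (hf0 : f 0 = 0) (ht : 0 < t) {a : ℝ}
    (hderiv : HasDerivAt f a (Function.invFunOn f (Ici 0) t)) (ha : a ≠ 0) :
    HasDerivAt (Function.invFunOn f (Ici 0)) a⁻¹ t :=
  hderiv.of_local_left_inverse
    ((continuousOn_invFunOn_Ici hf hmono hf0).continuousAt (Ici_mem_nhds ht)) ha
    (eventually_of_mem (Ici_mem_nhds ht) fun _ hy => hf.invOn_invFunOn.2 hy)

end Inverse

section Complementary

variable {φ : ℝ → ℝ} {t : ℝ}

theorem IsRegularNFunction.strictMonoOn_deriv (hφ : IsRegularNFunction φ) :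
    StrictMonoOn (deriv φ) (Ici 0) :=
  strictMonoOn_Ici_of_hasDerivAt_pos hφ.deriv_continuousOn
    (fun t ht => (hφ.diffAt2 t ht).hasDerivAt) hφ.deriv2_pos

theorem IsRegularNFunction.bijOn_deriv (hφ : IsRegularNFunction φ) (h0 : deriv φ 0 = 0)
    (htop : Tendsto (deriv φ) atTop atTop) : BijOn (deriv φ) (Ici 0) (Ici 0) :=
  bijOn_Ici_of_strictMonoOn hφ.deriv_continuousOn hφ.strictMonoOn_deriv h0 htop

theorem IsRegularNFunction.hasDerivAt_invFunOn_deriv (hφ : IsRegularNFunction φ)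
    (h0 : deriv φ 0 = 0) (htop : Tendsto (deriv φ) atTop atTop) (ht : 0 < t) :
    HasDerivAt (Function.invFunOn (deriv φ) (Ici 0))
      (deriv (deriv φ) (Function.invFunOn (deriv φ) (Ici 0) t))⁻¹ t := by
  have hbij := hφ.bijOn_deriv h0 htop
  have hs := invFunOn_Ici_pos hbij h0 ht
  exact hasDerivAt_invFunOn_Ici hbij hφ.strictMonoOn_deriv.monotoneOn h0 ht
    (hφ.diffAt2 _ hs).hasDerivAt (hφ.deriv2_pos _ hs).ne'

theorem IsRegularNFunction.deriv_conj (hφ : IsRegularNFunction φ) (h0 : deriv φ 0 = 0)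
    (htop : Tendsto (deriv φ) atTop atTop) (ht : 0 ≤ t) :
    deriv (conj φ) t = Function.invFunOn (deriv φ) (Ici 0) t := by
  have hbij := hφ.bijOn_deriv h0 htop
  have hmono := hφ.strictMonoOn_deriv.monotoneOn
  exact deriv_integral_of_monotoneOn (continuousOn_invFunOn_Ici hbij hmono h0)
    (monotoneOn_invFunOn_Ici hbij hmono) (invFunOn_Ici_zero hbij h0) ht

theorem IsRegularNFunction.deriv_deriv_conj (hφ : IsRegularNFunction φ) (h0 : deriv φ 0 = 0)
    (htop : Tendsto (deriv φ) atTop atTop) (ht : 0 < t) :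
    deriv (deriv (conj φ)) t = (deriv (deriv φ) (Function.invFunOn (deriv φ) (Ici 0) t))⁻¹ :=
  (hasDerivAt_deriv_integral
    (continuousOn_invFunOn_Ici (hφ.bijOn_deriv h0 htop) hφ.strictMonoOn_deriv.monotoneOn h0) ht
    (hφ.hasDerivAt_invFunOn_deriv h0 htop ht)).deriv

theorem isRegularNFunction_conj (hφ : IsRegularNFunction φ) (h0 : deriv φ 0 = 0)
    (htop : Tendsto (deriv φ) atTop atTop) : IsRegularNFunction (conj φ) := by
  have hbij := hφ.bijOn_deriv h0 htop
  have hmono := hφ.strictMonoOn_deriv.monotoneOn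
  have hcont := continuousOn_invFunOn_Ici hbij hmono h0
  refine isRegularNFunction_integral hcont (invFunOn_Ici_zero hbij h0)
    (tendsto_invFunOn_Ici_atTop hbij hmono) (fun t ht => hφ.hasDerivAt_invFunOn_deriv h0 htop ht)
    (fun t (ht : 0 < t) => ?_)
    (fun t ht => inv_pos.2 (hφ.deriv2_pos _ (invFunOn_Ici_pos hbij h0 ht)))
  have hs := invFunOn_Ici_pos hbij h0 ht
  exact ((hφ.deriv2_continuousOn.continuousAt (Ioi_mem_nhds hs)).comp
    (hcont.continuousAt (Ici_mem_nhds ht))).inv₀ (hφ.deriv2_pos _ hs).ne' |>.continuousWithinAt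

theorem isBalanced_conj {γ₁ γ₂ : ℝ} (h : IsBalanced φ γ₁ γ₂) (h0 : deriv φ 0 = 0)
    (htop : Tendsto (deriv φ) atTop atTop) : IsBalanced (conj φ) γ₂⁻¹ γ₁⁻¹ := by
  obtain ⟨hφ, ⟨hγ₁, hγ₁'⟩, hγ₂, hlower, hupper⟩ := h
  have hbij := hφ.bijOn_deriv h0 htop
  have hconj (t : ℝ) (ht : 0 < t) : ∃ s, 0 < s ∧ deriv (conj φ) t = s ∧
      t * deriv (deriv (conj φ)) t = deriv φ s / deriv (deriv φ) s := by
    refine ⟨_, invFunOn_Ici_pos hbij h0 ht, hφ.deriv_conj h0 htop ht.le, ?_⟩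
    rw [hφ.deriv_deriv_conj h0 htop ht, hbij.invOn_invFunOn.2 ht.le, div_eq_mul_inv]
  refine ⟨isRegularNFunction_conj hφ h0 htop,
    ⟨inv_pos.2 (by linarith), inv_le_one_of_one_le₀ hγ₂⟩,
    (one_le_inv₀ hγ₁).2 hγ₁', fun t ht => ?_, fun t ht => ?_⟩ <;>
    obtain ⟨s, hs, hd, hdd⟩ := hconj t ht <;> rw [hd, hdd]
  · rw [le_div_iff₀ (hφ.deriv2_pos s hs)]
    calc γ₂⁻¹ * s * deriv (deriv φ) s = γ₂⁻¹ * (s * deriv (deriv φ) s) := by ring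
      _ ≤ γ₂⁻¹ * (γ₂ * deriv φ s) :=
        mul_le_mul_of_nonneg_left (hupper s hs) (inv_nonneg.2 (by linarith))
      _ = deriv φ s := by field_simp
  · rw [div_le_iff₀ (hφ.deriv2_pos s hs)]
    calc deriv φ s = γ₁⁻¹ * (γ₁ * deriv φ s) := by field_simp
      _ ≤ γ₁⁻¹ * (s * deriv (deriv φ) s) :=
        mul_le_mul_of_nonneg_left (hlower s hs) (inv_nonneg.2 hγ₁.le)
      _ = γ₁⁻¹ * s * deriv (deriv φ) s := by ring

theorem satisfiesDelta2_conj (hφ : IsRegularNFunction φ)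
    (h0 : deriv φ 0 = 0) (htop : Tendsto (deriv φ) atTop atTop) {c : ℝ} (hc : 1 ≤ c)
    (hgrowth : ∀ s, 0 ≤ s → 2 * deriv φ s ≤ deriv φ (c * s)) :
    SatisfiesDelta2 (conj φ) (4 * c ^ 2) := by
  have hbij := hφ.bijOn_deriv h0 htop
  have hmono := hφ.strictMonoOn_deriv
  refine satisfiesDelta2_integral_of_doubling (monotoneOn_invFunOn_Ici hbij hmono.monotoneOn)
    (invFunOn_Ici_zero hbij h0).ge hc fun u (hu : 0 ≤ u) => ?_
  have hs : 0 ≤ Function.invFunOn (deriv φ) (Ici 0) u := hbij.surjOn.mapsTo_invFunOn hu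
  rw [← hmono.le_iff_le (hbij.surjOn.mapsTo_invFunOn (by positivity : (0:ℝ) ≤ 2 * u))
    (mem_Ici.2 (by positivity)), hbij.invOn_invFunOn.2 (by positivity : (0:ℝ) ≤ 2 * u)]
  calc 2 * u = 2 * deriv φ (Function.invFunOn (deriv φ) (Ici 0) u) := by
        rw [hbij.invOn_invFunOn.2 hu]
    _ ≤ _ := hgrowth _ hs

end Complementary

def omgDeriv (p δ t : ℝ) : ℝ := (δ + t) ^ (p - 2) * t

def omgDeriv2 (p δ t : ℝ) : ℝ := (δ + t) ^ (p - 3) * ((p - 1) * t + δ)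

section Omega

variable {p δ t : ℝ}

theorem omgDeriv_zero : omgDeriv p δ 0 = 0 := by simp [omgDeriv]

theorem omgDeriv_eq_rpow_sub_three_mul (h : 0 < δ + t) :
    omgDeriv p δ t = (δ + t) ^ (p - 3) * ((δ + t) * t) := by
  rw [omgDeriv, show p - 2 = p - 3 + 1 by ring, Real.rpow_add_one h.ne']
  ring

theorem continuousOn_omgDeriv (hp1 : 1 < p) (hδ : 0 ≤ δ) :
    ContinuousOn (omgDeriv p δ) (Ici 0) := by
  rcases hδ.eq_or_lt with rfl | hδ
  · refine (continuousOn_id.rpow_const fun _ _ => Or.inr (by linarith : 0 ≤ p - 1)).congr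
      fun t (ht : 0 ≤ t) => ?_
    simp only [omgDeriv, zero_add, id_eq]
    rw [← Real.rpow_add_one' ht (by linarith)]
    ring_nf
  · exact ((continuousOn_const.add continuousOn_id).rpow_const fun t (ht : 0 ≤ t) =>
      Or.inl (show 0 < δ + t by linarith).ne').mul continuousOn_id

theorem hasDerivAt_omgDeriv (hδ : 0 ≤ δ) (ht : 0 < t) :
    HasDerivAt (omgDeriv p δ) (omgDeriv2 p δ t) t := by
  have hpos : 0 < δ + t := by linarith
  have hbase : HasDerivAt (fun s => (δ + s) ^ (p - 2)) ((p - 2) * (δ + t) ^ (p - 2 - 1) * 1) t :=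
    (Real.hasDerivAt_rpow_const (Or.inl hpos.ne')).comp t ((hasDerivAt_id t).const_add δ)
  have hprod : HasDerivAt (omgDeriv p δ) _ t := hbase.mul (hasDerivAt_id t)
  convert hprod using 1
  rw [omgDeriv2, show p - 2 - 1 = p - 3 by ring, show p - 2 = p - 3 + 1 by ring,
    Real.rpow_add_one hpos.ne']
  ring

theorem omgDeriv2_pos (hp1 : 1 < p) (hδ : 0 ≤ δ) (ht : 0 < t) : 0 < omgDeriv2 p δ t :=
  mul_pos (Real.rpow_pos_of_pos (by linarith) _) (by nlinarith)

theorem continuousOn_omgDeriv2 (hδ : 0 ≤ δ) : ContinuousOn (omgDeriv2 p δ) (Ioi 0) :=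
  ((continuousOn_const.add continuousOn_id).rpow_const fun t (ht : 0 < t) =>
    Or.inl (show 0 < δ + t by linarith).ne').mul
      ((continuousOn_const.mul continuousOn_id).add continuousOn_const)

theorem strictMonoOn_omgDeriv (hp1 : 1 < p) (hδ : 0 ≤ δ) :
    StrictMonoOn (omgDeriv p δ) (Ici 0) :=
  strictMonoOn_Ici_of_hasDerivAt_pos (continuousOn_omgDeriv hp1 hδ)
    (fun _ ht => hasDerivAt_omgDeriv hδ ht) fun _ ht => omgDeriv2_pos hp1 hδ ht

theorem omgDeriv_mul_le (hp2 : p ≤ 2) (hδ : 0 ≤ δ) {c : ℝ} (hc : 1 ≤ c) (ht : 0 ≤ t) :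
    omgDeriv p δ (c * t) ≤ c * omgDeriv p δ t := by
  rcases ht.eq_or_lt with rfl | ht
  · simp [omgDeriv_zero]
  have hbase : (δ + c * t) ^ (p - 2) ≤ (δ + t) ^ (p - 2) :=
    Real.rpow_le_rpow_of_nonpos (by linarith) (by nlinarith) (by linarith)
  calc omgDeriv p δ (c * t) = (δ + c * t) ^ (p - 2) * (c * t) := rfl
    _ ≤ (δ + t) ^ (p - 2) * (c * t) := by gcongr
    _ = c * omgDeriv p δ t := by rw [omgDeriv]; ring

theorem rpow_mul_omgDeriv_le (hp2 : p ≤ 2) (hδ : 0 ≤ δ) {c : ℝ} (hc : 1 ≤ c) (ht : 0 ≤ t) :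
    c ^ (p - 1) * omgDeriv p δ t ≤ omgDeriv p δ (c * t) := by
  rcases ht.eq_or_lt with rfl | ht
  · simp [omgDeriv_zero]
  have hbase : (c * (δ + t)) ^ (p - 2) ≤ (δ + c * t) ^ (p - 2) :=
    Real.rpow_le_rpow_of_nonpos (by positivity) (by nlinarith) (by linarith)
  calc c ^ (p - 1) * omgDeriv p δ t = (c * (δ + t)) ^ (p - 2) * (c * t) := by
        rw [Real.mul_rpow (by linarith) (by linarith), show p - 1 = p - 2 + 1 by ring,
          Real.rpow_add_one (by linarith), omgDeriv]
        ring
    _ ≤ (δ + c * t) ^ (p - 2) * (c * t) := by gcongr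
    _ = omgDeriv p δ (c * t) := rfl

theorem tendsto_omgDeriv_atTop (hp1 : 1 < p) (hp2 : p ≤ 2) (hδ : 0 ≤ δ) :
    Tendsto (omgDeriv p δ) atTop atTop := by
  have hpos : 0 < omgDeriv p δ 1 := mul_pos (Real.rpow_pos_of_pos (by linarith) _) one_pos
  refine tendsto_atTop_mono' _ ?_
    ((tendsto_rpow_atTop (by linarith : 0 < p - 1)).atTop_mul_const hpos)
  filter_upwards [eventually_ge_atTop 1] with t ht
  simpa using rpow_mul_omgDeriv_le hp2 hδ ht zero_le_one

theorem isRegularNFunction_omg (hp1 : 1 < p) (hp2 : p ≤ 2) (hδ : 0 ≤ δ) :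
    IsRegularNFunction (omg p δ) :=
  isRegularNFunction_integral (continuousOn_omgDeriv hp1 hδ) omgDeriv_zero
    (tendsto_omgDeriv_atTop hp1 hp2 hδ) (fun _ ht => hasDerivAt_omgDeriv hδ ht)
    (continuousOn_omgDeriv2 hδ) fun _ ht => omgDeriv2_pos hp1 hδ ht

theorem deriv_omg (hp1 : 1 < p) (hδ : 0 ≤ δ) (ht : 0 ≤ t) :
    deriv (omg p δ) t = omgDeriv p δ t :=
  deriv_integral_of_monotoneOn (continuousOn_omgDeriv hp1 hδ)
    (strictMonoOn_omgDeriv hp1 hδ).monotoneOn omgDeriv_zero ht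

theorem deriv_deriv_omg (hp1 : 1 < p) (hδ : 0 ≤ δ) (ht : 0 < t) :
    deriv (deriv (omg p δ)) t = omgDeriv2 p δ t :=
  (hasDerivAt_deriv_integral (continuousOn_omgDeriv hp1 hδ) ht (hasDerivAt_omgDeriv hδ ht)).deriv

theorem sub_one_mul_omgDeriv_le (hp2 : p ≤ 2) (hδ : 0 ≤ δ) (ht : 0 < t) :
    (p - 1) * omgDeriv p δ t ≤ t * omgDeriv2 p δ t := by
  have hpos : 0 < δ + t := by linarith
  rw [omgDeriv_eq_rpow_sub_three_mul hpos, omgDeriv2, mul_left_comm, mul_left_comm t]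
  have hgap : 0 ≤ δ * t * (2 - p) := by have := sub_nonneg.2 hp2; positivity
  exact mul_le_mul_of_nonneg_left (by nlinarith) (Real.rpow_nonneg hpos.le _)

theorem mul_omgDeriv2_le (hp2 : p ≤ 2) (hδ : 0 ≤ δ) (ht : 0 < t) :
    t * omgDeriv2 p δ t ≤ omgDeriv p δ t := by
  have hpos : 0 < δ + t := by linarith
  rw [omgDeriv_eq_rpow_sub_three_mul hpos, omgDeriv2, mul_left_comm]
  have hgap : 0 ≤ t * t * (2 - p) := by have := sub_nonneg.2 hp2; positivity
  exact mul_le_mul_of_nonneg_left (by nlinarith) (Real.rpow_nonneg hpos.le _)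

theorem isBalanced_omg (hp1 : 1 < p) (hp2 : p ≤ 2) (hδ : 0 ≤ δ) :
    IsBalanced (omg p δ) (p - 1) 1 where
  regular := isRegularNFunction_omg hp1 hp2 hδ
  gamma1_mem := ⟨by linarith, by linarith⟩
  gamma2_ge := le_rfl
  lower t ht := by
    rw [deriv_omg hp1 hδ ht.le, deriv_deriv_omg hp1 hδ ht]
    exact sub_one_mul_omgDeriv_le hp2 hδ ht
  upper t ht := by
    rw [deriv_omg hp1 hδ ht.le, deriv_deriv_omg hp1 hδ ht, one_mul]
    exact mul_omgDeriv2_le hp2 hδ ht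

theorem deriv_omg_zero (hp1 : 1 < p) (hδ : 0 ≤ δ) : deriv (omg p δ) 0 = 0 :=
  (deriv_omg hp1 hδ le_rfl).trans omgDeriv_zero

theorem tendsto_deriv_omg_atTop (hp1 : 1 < p) (hp2 : p ≤ 2) (hδ : 0 ≤ δ) :
    Tendsto (deriv (omg p δ)) atTop atTop :=
  (tendsto_omgDeriv_atTop hp1 hp2 hδ).congr' <|
    (eventually_ge_atTop 0).mono fun _ ht => (deriv_omg hp1 hδ ht).symm

theorem omg_le_deriv_omg_mul (hp1 : 1 < p) (hδ : 0 ≤ δ) (ht : 0 ≤ t) :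
    omg p δ t ≤ deriv (omg p δ) t * t := by
  rw [deriv_omg hp1 hδ ht]
  exact integral_le_mul_of_monotoneOn (strictMonoOn_omgDeriv hp1 hδ).monotoneOn ht

theorem deriv_omg_mul_le (hp1 : 1 < p) (hp2 : p ≤ 2) (hδ : 0 ≤ δ) (ht : 0 ≤ t) :
    deriv (omg p δ) t * t ≤ 2 ^ (p + 1) * omg p δ t := by
  have hmono := (strictMonoOn_omgDeriv hp1 hδ).monotoneOn
  have hfour : (2 * 2 : ℝ) ≤ 2 ^ (p + 1) :=
    calc (2 * 2 : ℝ) = 2 ^ (2 : ℝ) := by norm_num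
      _ ≤ 2 ^ (p + 1) := Real.rpow_le_rpow_of_exponent_le one_le_two (by linarith)
  rw [deriv_omg hp1 hδ ht]
  calc omgDeriv p δ t * t ≤ 2 * 2 * omg p δ t :=
        mul_le_integral_of_doubling hmono omgDeriv_zero.ge zero_le_two
          (fun _ hu => omgDeriv_mul_le hp2 hδ one_le_two hu) ht
    _ ≤ 2 ^ (p + 1) * omg p δ t :=
        mul_le_mul_of_nonneg_right hfour (integral_nonneg_of_monotoneOn hmono omgDeriv_zero.ge ht)

theorem satisfiesDelta2_omg (hp1 : 1 < p) (hp2 : p ≤ 2) (hδ : 0 ≤ δ) :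
    SatisfiesDelta2 (omg p δ) (4 * 2 ^ 2) :=
  satisfiesDelta2_integral_of_doubling (strictMonoOn_omgDeriv hp1 hδ).monotoneOn
    omgDeriv_zero.ge one_le_two fun _ hu => omgDeriv_mul_le hp2 hδ one_le_two hu

theorem isBalanced_conj_omg (hp1 : 1 < p) (hp2 : p ≤ 2) (hδ : 0 ≤ δ) :
    IsBalanced (conj (omg p δ)) 1 (p - 1)⁻¹ := by
  simpa using isBalanced_conj (isBalanced_omg hp1 hp2 hδ) (deriv_omg_zero hp1 hδ)
    (tendsto_deriv_omg_atTop hp1 hp2 hδ)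

theorem satisfiesDelta2_conj_omg (hp1 : 1 < p) (hp2 : p ≤ 2) (hδ : 0 ≤ δ) :
    SatisfiesDelta2 (conj (omg p δ)) (4 * (2 ^ (p - 1)⁻¹) ^ 2) := by
  have hc : 1 ≤ (2 : ℝ) ^ (p - 1)⁻¹ := Real.one_le_rpow one_le_two (inv_nonneg.2 (by linarith))
  refine satisfiesDelta2_conj (isRegularNFunction_omg hp1 hp2 hδ) (deriv_omg_zero hp1 hδ)
    (tendsto_deriv_omg_atTop hp1 hp2 hδ) hc fun s hs => ?_
  rw [deriv_omg hp1 hδ hs, deriv_omg hp1 hδ (by positivity)]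
  calc 2 * omgDeriv p δ s = ((2 : ℝ) ^ (p - 1)⁻¹) ^ (p - 1) * omgDeriv p δ s := by
        rw [Real.rpow_inv_rpow zero_le_two (by linarith)]
    _ ≤ _ := rpow_mul_omgDeriv_le hp2 hδ hc hs

end Omega

/-- For `p ∈ (1,2]` and `δ ∈ [0,∞)`, `ω = ω_{p,δ}` satisfies
`ω(t) ≤ ω'(t)·t ≤ 2^{p+1} ω(t)` for `t ≥ 0` and `(p−1) ω'(t) ≤ ω''(t)·t ≤ ω'(t)` for
`t > 0`; `ω` is balanced with characteristics `(p−1, 1)`, `ω*` is balanced with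
characteristics `(1, (p−1)⁻¹)`, and both satisfy the Δ₂-condition with constants
depending only on `p`. -/
theorem stmt0 (p : ℝ) (hp : p ∈ Set.Ioc (1:ℝ) 2) :
    ∃ K Kstar : ℝ,
      ∀ δ : ℝ, 0 ≤ δ →
        (∀ t : ℝ, 0 ≤ t →
          omg p δ t ≤ deriv (omg p δ) t * t ∧
          deriv (omg p δ) t * t ≤ (2:ℝ) ^ (p + 1) * omg p δ t) ∧
        (∀ t : ℝ, 0 < t →
          (p - 1) * deriv (omg p δ) t ≤ deriv (deriv (omg p δ)) t * t ∧
          deriv (deriv (omg p δ)) t * t ≤ deriv (omg p δ) t) ∧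
        IsBalanced (omg p δ) (p - 1) 1 ∧
        SatisfiesDelta2 (omg p δ) K ∧
        IsBalanced (conj (omg p δ)) 1 (p - 1)⁻¹ ∧
        SatisfiesDelta2 (conj (omg p δ)) Kstar := by
  obtain ⟨hp1, hp2⟩ := hp
  refine ⟨4 * 2 ^ 2, 4 * (2 ^ (p - 1)⁻¹) ^ 2, fun δ hδ => ?_⟩
  have hbal := isBalanced_omg hp1 hp2 hδ
  refine ⟨fun t ht => ⟨omg_le_deriv_omg_mul hp1 hδ ht, deriv_omg_mul_le hp1 hp2 hδ ht⟩,
    fun t ht => ⟨?_, ?_⟩, hbal, satisfiesDelta2_omg hp1 hp2 hδ, isBalanced_conj_omg hp1 hp2 hδ,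
    satisfiesDelta2_conj_omg hp1 hp2 hδ⟩
  · simpa only [mul_comm t] using hbal.lower t ht
  · simpa only [mul_comm t, one_mul] using hbal.upper t ht

end
end

section
/- Let φ be a balanced N-function with characteristics (γ₁,γ₂). Then for every A ≥ 1 the A-approximation φ^A is also a balanced N-function with the same characteristics (γ₁,γ₂), i.e. γ₁·(φ^A)'(t) ≤ t·(φ^A)''(t) ≤ γ₂·(φ^A)'(t) for all t > 0. -/
open Real Set MeasureTheory Filter Matrix

noncomputable section

/-! Beyond `A`, `φ^A` is the Taylor polynomial `φ(A) + b (t - A) + c (t - A)² / 2` with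
`b = φ'(A)`, `c = φ''(A)`. It matches `φ` to first order at `A`, so `(φ^A)''(t) = φ''(min t A)` is
still continuous and positive. For `t > A` and `γ ∈ {γ₁, γ₂}`,
`t (φ^A)''(t) - γ (φ^A)'(t) = (A c - γ b) + (1 - γ) c (t - A)`,
and both summands have the required sign by the balance condition at `A` and `γ₁ ≤ 1 ≤ γ₂`. -/

open Topology

section IteLe

variable {f g : ℝ → ℝ} {a x : ℝ}

theorem hasDerivAt_ite_le {f' : ℝ} (hf : x ≤ a → HasDerivAt f f' x)
    (hg : a ≤ x → HasDerivAt g f' x) (hfg : f a = g a) :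
    HasDerivAt (fun y => if y ≤ a then f y else g y) f' x := by
  rcases lt_trichotomy x a with hx | rfl | hx
  · refine (hf hx.le).congr_of_eventuallyEq ?_
    filter_upwards [Iio_mem_nhds hx] with y hy using if_pos hy.le
  · have hl : HasDerivWithinAt (fun y => if y ≤ x then f y else g y) f' (Iic x) x :=
      (hf le_rfl).hasDerivWithinAt.congr (fun y hy => if_pos hy) (if_pos le_rfl)
    have hr : HasDerivWithinAt (fun y => if y ≤ x then f y else g y) f' (Ici x) x := by
      refine (hg le_rfl).hasDerivWithinAt.congr (fun y hy => ?_) (by rw [if_pos le_rfl, hfg])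
      rcases (mem_Ici.mp hy).eq_or_lt with rfl | hy
      · rw [if_pos le_rfl, hfg]
      · exact if_neg hy.not_ge
    simpa only [Iic_union_Ici, hasDerivWithinAt_univ] using hl.union hr
  · refine (hg hx.le).congr_of_eventuallyEq ?_
    filter_upwards [Ioi_mem_nhds hx] with y hy using if_neg hy.not_ge

theorem differentiableAt_ite_le (hf : x ≤ a → DifferentiableAt ℝ f x)
    (hg : a ≤ x → DifferentiableAt ℝ g x) (hfg : f a = g a) (hfg' : deriv f a = deriv g a) :
    DifferentiableAt ℝ (fun y => if y ≤ a then f y else g y) x := by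
  refine (hasDerivAt_ite_le (f' := if x ≤ a then deriv f x else deriv g x) (fun hx => ?_)
    (fun hx => ?_) hfg).differentiableAt
  · rw [if_pos hx]
    exact (hf hx).hasDerivAt
  · rcases hx.eq_or_lt with rfl | hx
    · rw [if_pos le_rfl, hfg']
      exact (hg le_rfl).hasDerivAt
    · rw [if_neg hx.not_ge]
      exact (hg hx.le).hasDerivAt

theorem deriv_ite_le (hf : DifferentiableAt ℝ f a) (hg : DifferentiableAt ℝ g a)
    (hfg : f a = g a) (hfg' : deriv f a = deriv g a) :
    deriv (fun y => if y ≤ a then f y else g y) = fun y => if y ≤ a then deriv f y else deriv g y := by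
  funext x
  rcases lt_trichotomy x a with hx | rfl | hx
  · rw [if_pos hx.le]
    refine Filter.EventuallyEq.deriv_eq ?_
    filter_upwards [Iio_mem_nhds hx] with y hy using if_pos hy.le
  · rw [if_pos le_rfl]
    exact (hasDerivAt_ite_le (fun _ => hf.hasDerivAt) (fun _ => hfg' ▸ hg.hasDerivAt) hfg).deriv
  · rw [if_neg hx.not_ge]
    refine Filter.EventuallyEq.deriv_eq ?_
    filter_upwards [Ioi_mem_nhds hx] with y hy using if_neg hy.not_ge

end IteLe

theorem continuousOn_Ici_of_eventuallyEq {F G : ℝ → ℝ} {a : ℝ}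
    (hG : ContinuousWithinAt G (Ici a) a) (hFG : F =ᶠ[𝓝 a] G) (hF : ∀ t, a < t → ContinuousAt F t) :
    ContinuousOn F (Ici a) := by
  intro t ht
  rcases (mem_Ici.mp ht).eq_or_lt with rfl | ht
  · exact hG.congr_of_eventuallyEq (nhdsWithin_le_nhds hFG) hFG.eq_of_nhds
  · exact (hF t ht).continuousWithinAt

section Approx

variable {φ : ℝ → ℝ} {A t : ℝ}

def quadraticTaylor (φ : ℝ → ℝ) (A t : ℝ) : ℝ :=
  φ A + deriv φ A * (t - A) + deriv (deriv φ) A / 2 * (t - A) ^ 2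

theorem hasDerivAt_quadraticTaylor :
    HasDerivAt (quadraticTaylor φ A) (deriv φ A + deriv (deriv φ) A * (t - A)) t := by
  have hlin : HasDerivAt (fun s => s - A) 1 t := (hasDerivAt_id' t).sub_const A
  exact (((hlin.const_mul (deriv φ A)).const_add (φ A)).add
    ((hlin.pow 2).const_mul (deriv (deriv φ) A / 2))).congr_deriv (by ring)

theorem deriv_quadraticTaylor :
    deriv (quadraticTaylor φ A) = fun t => deriv φ A + deriv (deriv φ) A * (t - A) :=
  funext fun _ => hasDerivAt_quadraticTaylor.deriv

theorem quadraticTaylor_pos (hφ : 0 < φ A) (hφ' : 0 ≤ deriv φ A) (hφ'' : 0 ≤ deriv (deriv φ) A)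
    (ht : A ≤ t) : 0 < quadraticTaylor φ A t :=
  add_pos_of_pos_of_nonneg (add_pos_of_pos_of_nonneg hφ (mul_nonneg hφ' (sub_nonneg.2 ht)))
    (mul_nonneg (div_nonneg hφ'' zero_le_two) (sq_nonneg _))

theorem mul_sq_le_quadraticTaylor (hφ : 0 ≤ φ A) (hφ' : 0 ≤ deriv φ A)
    (hφ'' : 0 ≤ deriv (deriv φ) A) (hA : 0 ≤ A) (ht : 2 * A ≤ t) :
    deriv (deriv φ) A / 8 * t ^ 2 ≤ quadraticTaylor φ A t := by
  unfold quadraticTaylor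
  -- `(t - A)² - t² / 4 = (t - 2A) (3t - 2A) / 4`
  nlinarith [mul_nonneg hφ' (by linarith : 0 ≤ t - A),
    mul_nonneg (mul_nonneg hφ'' (by linarith : 0 ≤ t - 2 * A)) (by linarith : 0 ≤ 3 * t - 2 * A)]

theorem approxA_eq_ite : approxA φ A = fun t => if t ≤ A then φ t else quadraticTaylor φ A t := by
  funext t
  unfold approxA quadraticTaylor
  split_ifs
  · rfl
  · ring

theorem approxA_of_le (ht : t ≤ A) : approxA φ A t = φ t := if_pos ht

theorem approxA_of_lt (ht : A < t) : approxA φ A t = quadraticTaylor φ A t := by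
  rw [approxA_eq_ite]
  exact if_neg ht.not_ge

theorem approxA_eventuallyEq (ht : t < A) : approxA φ A =ᶠ[𝓝 t] φ := by
  filter_upwards [Iio_mem_nhds ht] with y hy using approxA_of_le hy.le

theorem differentiableAt_approxA (hφ : t ≤ A → DifferentiableAt ℝ φ t) :
    DifferentiableAt ℝ (approxA φ A) t := by
  rw [approxA_eq_ite]
  exact differentiableAt_ite_le hφ (fun _ => hasDerivAt_quadraticTaylor.differentiableAt)
    (by simp [quadraticTaylor]) (by simp [deriv_quadraticTaylor])

theorem deriv_approxA (hφ : DifferentiableAt ℝ φ A) :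
    deriv (approxA φ A) = fun t => if t ≤ A then deriv φ t
      else deriv φ A + deriv (deriv φ) A * (t - A) := by
  rw [approxA_eq_ite, deriv_ite_le hφ hasDerivAt_quadraticTaylor.differentiableAt
    (by simp [quadraticTaylor]) (by simp [deriv_quadraticTaylor]), deriv_quadraticTaylor]

theorem differentiableAt_deriv_approxA (hφ : DifferentiableAt ℝ φ A)
    (hφ' : t ≤ A → DifferentiableAt ℝ (deriv φ) t) :
    DifferentiableAt ℝ (deriv (approxA φ A)) t := by
  rw [deriv_approxA hφ]
  exact differentiableAt_ite_le hφ' (fun _ => by fun_prop) (by simp) (by simp)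

theorem deriv_deriv_approxA (hφ : DifferentiableAt ℝ φ A) (hφ' : DifferentiableAt ℝ (deriv φ) A) :
    deriv (deriv (approxA φ A)) = fun t => deriv (deriv φ) (min t A) := by
  rw [deriv_approxA hφ, deriv_ite_le hφ' (by fun_prop) (by simp) (by simp)]
  funext t
  rw [min_def]
  split_ifs <;> simp

end Approx

theorem isRegularNFunction_approxA {φ : ℝ → ℝ} {A : ℝ} (hφ : IsRegularNFunction φ) (hA : 0 < A)
    (hφA : 0 ≤ deriv φ A) : IsRegularNFunction (approxA φ A) := by
  have hφA₁ := hφ.diffAt A hA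
  have hφA₂ := hφ.diffAt2 A hA
  have hc := hφ.deriv2_pos A hA
  have hnear : approxA φ A =ᶠ[𝓝 0] φ := approxA_eventuallyEq hA
  have hdiff (t : ℝ) (ht : 0 < t) : DifferentiableAt ℝ (approxA φ A) t :=
    differentiableAt_approxA fun _ => hφ.diffAt t ht
  have hdiff' (t : ℝ) (ht : 0 < t) : DifferentiableAt ℝ (deriv (approxA φ A)) t :=
    differentiableAt_deriv_approxA hφA₁ fun _ => hφ.diffAt2 t ht
  have hderiv2 (t : ℝ) (ht : 0 < t) : 0 < deriv (deriv (approxA φ A)) t := by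
    rw [deriv_deriv_approxA hφA₁ hφA₂]
    exact hφ.deriv2_pos _ (lt_min ht hA)
  have hcont : ContinuousOn (approxA φ A) (Ici 0) :=
    continuousOn_Ici_of_eventuallyEq (hφ.continuousOn 0 self_mem_Ici) hnear
      fun t ht => (hdiff t ht).continuousAt
  have hgrowth (t : ℝ) (ht : 2 * A ≤ t) : deriv (deriv φ) A / 8 * t ≤ approxA φ A t / t := by
    rw [le_div_iff₀ (by linarith), approxA_of_lt (by linarith)]
    linarith [mul_sq_le_quadraticTaylor (hφ.pos A hA).le hφA hc.le hA.le ht]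
  refine
    { continuousOn := hcont
      convexOn := by
        refine convexOn_of_deriv2_nonneg (convex_Ici 0) hcont ?_ ?_ ?_ <;> rw [interior_Ici]
        · exact fun t ht => (hdiff t ht).differentiableWithinAt
        · exact fun t ht => (hdiff' t ht).differentiableWithinAt
        · exact fun t ht => (hderiv2 t ht).le
      pos := fun t ht => ?_
      tendsto_zero := hφ.tendsto_zero.congr' <| nhdsWithin_le_nhds <|
        hnear.mono fun t ht => congrArg (· / t) ht.symm
      tendsto_atTop := tendsto_atTop_mono' atTop (eventually_atTop.2 ⟨2 * A, hgrowth⟩)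
        (tendsto_id.const_mul_atTop (by positivity))
      diffAt := hdiff
      deriv_continuousOn := continuousOn_Ici_of_eventuallyEq
        (hφ.deriv_continuousOn 0 self_mem_Ici) hnear.deriv fun t ht => (hdiff' t ht).continuousAt
      diffAt2 := hdiff'
      deriv2_continuousOn := by
        rw [deriv_deriv_approxA hφA₁ hφA₂]
        exact hφ.deriv2_continuousOn.comp (continuous_id.min continuous_const).continuousOn
          fun t ht => lt_min ht hA
      deriv2_pos := hderiv2 }
  rcases le_or_gt t A with htA | htA
  · rw [approxA_of_le htA]
    exact hφ.pos t ht
  · rw [approxA_of_lt htA]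
    exact quadraticTaylor_pos (hφ.pos A hA) hφA hc.le htA.le

theorem IsBalanced.deriv_pos {φ : ℝ → ℝ} {γ₁ γ₂ t : ℝ} (h : IsBalanced φ γ₁ γ₂) (ht : 0 < t) :
    0 < deriv φ t :=
  pos_of_mul_pos_right ((mul_pos ht (h.regular.deriv2_pos t ht)).trans_le (h.upper t ht))
    (zero_le_one.trans h.gamma2_ge)

theorem isBalanced_approxA {φ : ℝ → ℝ} {γ₁ γ₂ A : ℝ} (h : IsBalanced φ γ₁ γ₂) (hA : 0 < A) :
    IsBalanced (approxA φ A) γ₁ γ₂ := by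
  have hφA₁ := h.regular.diffAt A hA
  have hφA₂ := h.regular.diffAt2 A hA
  have hc := h.regular.deriv2_pos A hA
  have key (t : ℝ) (ht : 0 < t) :
      γ₁ * deriv (approxA φ A) t ≤ t * deriv (deriv (approxA φ A)) t ∧
      t * deriv (deriv (approxA φ A)) t ≤ γ₂ * deriv (approxA φ A) t := by
    rw [deriv_deriv_approxA hφA₁ hφA₂, deriv_approxA hφA₁]
    dsimp only
    split_ifs with htA
    · rw [min_eq_left htA]
      exact ⟨h.lower t ht, h.upper t ht⟩
    rw [min_eq_right (not_le.mp htA).le]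
    have hcA : 0 ≤ deriv (deriv φ) A * (t - A) := mul_nonneg hc.le (by linarith [not_le.mp htA])
    constructor
    · calc γ₁ * (deriv φ A + deriv (deriv φ) A * (t - A))
          = γ₁ * deriv φ A + γ₁ * (deriv (deriv φ) A * (t - A)) := by ring
        _ ≤ A * deriv (deriv φ) A + 1 * (deriv (deriv φ) A * (t - A)) :=
          add_le_add (h.lower A hA) (mul_le_mul_of_nonneg_right h.gamma1_mem.2 hcA)
        _ = t * deriv (deriv φ) A := by ring
    · calc t * deriv (deriv φ) A
          = A * deriv (deriv φ) A + 1 * (deriv (deriv φ) A * (t - A)) := by ring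
        _ ≤ γ₂ * deriv φ A + γ₂ * (deriv (deriv φ) A * (t - A)) :=
          add_le_add (h.upper A hA) (mul_le_mul_of_nonneg_right h.gamma2_ge hcA)
        _ = γ₂ * (deriv φ A + deriv (deriv φ) A * (t - A)) := by ring
  exact ⟨isRegularNFunction_approxA h.regular hA (h.deriv_pos hA).le, h.gamma1_mem, h.gamma2_ge,
    fun t ht => (key t ht).1, fun t ht => (key t ht).2⟩

/-- If `φ` is a balanced N-function with characteristics `(γ₁,γ₂)`,
then for every `A ≥ 1` the `A`-approximation `φ^A` is a balanced N-function with the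
same characteristics, i.e. `γ₁ (φ^A)'(t) ≤ t (φ^A)''(t) ≤ γ₂ (φ^A)'(t)` for `t > 0`. -/
theorem stmt2 (φ : ℝ → ℝ) (γ₁ γ₂ : ℝ) (h : IsBalanced φ γ₁ γ₂) (A : ℝ) (hA : 1 ≤ A) :
    IsBalanced (approxA φ A) γ₁ γ₂ ∧
    ∀ t : ℝ, 0 < t →
      γ₁ * deriv (approxA φ A) t ≤ t * deriv (deriv (approxA φ A)) t ∧
      t * deriv (deriv (approxA φ A)) t ≤ γ₂ * deriv (approxA φ A) t := by
  have hφA := isBalanced_approxA h (zero_lt_one.trans_le hA)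
  exact ⟨hφA, fun t ht => ⟨hφA.lower t ht, hφA.upper t ht⟩⟩

end
end

section
/- Let p ∈ (1,2], δ ∈ [0,∞) and A ≥ 1, and set ω := ω_{p,δ}. Then for all λ ≥ 0 and all t ≥ 0 one has ω(λt) ≤ max{λ, λ²}·ω(t) and ω^A(λt) ≤ max{λ, λ²}·ω^A(t). -/
open Real Set MeasureTheory Filter Matrix

noncomputable section

/-!
Write `ω(t) = ∫₀ᵗ f` with `f(s) = (δ + s)^(p-2) s`. For `1 ≤ p ≤ 2` the density `f` is
nondecreasing (it is `(δ + s)^(p-1) · s/(δ + s)`) while `f(s)/s = (δ + s)^(p-2)` is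
nonincreasing; together these give `f(λs) ≤ max{1, λ} f(s)`, and the substitution `s ↦ λs`
turns this into `ω(λt) ≤ max{λ, λ²} ω(t)`. The `A`-approximation `ω^A` is the primitive of
`f` continued beyond `A` by its tangent line, and since `0 ≤ f'(A) ≤ f(A)/A` this continuation
keeps both monotonicity properties, so the same argument applies to `ω^A`.
-/

section Scaling

variable {g : ℝ → ℝ}

theorem apply_mul_le_max_one_mul (hmono : MonotoneOn g (Ici 0))
    (hratio : AntitoneOn (fun s => g s / s) (Ioi 0)) (hg0 : 0 ≤ g 0) {lam s : ℝ}
    (hlam : 0 ≤ lam) (hs : 0 ≤ s) : g (lam * s) ≤ max 1 lam * g s := by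
  rcases le_total lam 1 with hle | hge
  · rw [max_eq_left hle, one_mul]
    exact hmono (mul_nonneg hlam hs) hs (mul_le_of_le_one_left hs hle)
  rw [max_eq_right hge]
  rcases hs.eq_or_lt with rfl | hs
  · simpa using le_mul_of_one_le_left hg0 hge
  have hratio' : g (lam * s) / (lam * s) ≤ g s / s :=
    hratio hs (mul_pos (by linarith) hs) (le_mul_of_one_le_left hs.le hge)
  rw [div_le_div_iff₀ (mul_pos (by linarith) hs) hs] at hratio'
  nlinarith

theorem integral_mul_le_max_mul_integral (hmono : MonotoneOn g (Ici 0))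
    (hratio : AntitoneOn (fun s => g s / s) (Ioi 0)) (hg0 : 0 ≤ g 0) {lam t : ℝ}
    (hlam : 0 ≤ lam) (ht : 0 ≤ t) :
    ∫ x in 0..lam * t, g x ≤ max lam (lam ^ 2) * ∫ x in 0..t, g x := by
  have hsub : uIcc 0 t ⊆ Ici 0 := by rw [uIcc_of_le ht]; exact Icc_subset_Ici_self
  have hint : IntervalIntegrable g volume 0 t := (hmono.mono hsub).intervalIntegrable
  have hint_comp : IntervalIntegrable (fun x => g (lam * x)) volume 0 t :=
    MonotoneOn.intervalIntegrable fun a ha b hb hab =>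
      hmono (mul_nonneg hlam (hsub ha)) (mul_nonneg hlam (hsub hb)) (by gcongr)
  calc ∫ x in 0..lam * t, g x
      _ = lam * ∫ x in 0..t, g (lam * x) := by
        rw [intervalIntegral.mul_integral_comp_mul_left, mul_zero]
      _ ≤ lam * ∫ x in 0..t, max 1 lam * g x := by
        gcongr
        refine intervalIntegral.integral_mono_on ht hint_comp (hint.const_mul _) fun x hx => ?_
        exact apply_mul_le_max_one_mul hmono hratio hg0 hlam hx.1
      _ = max lam (lam ^ 2) * ∫ x in 0..t, g x := by
        rw [intervalIntegral.integral_const_mul, ← mul_assoc, mul_max_of_nonneg _ _ hlam,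
          mul_one, sq]

end Scaling

section LinearExtension

def linearExtension (f : ℝ → ℝ) (A c s : ℝ) : ℝ :=
  if s ≤ A then f s else f A + c * (s - A)

variable {f : ℝ → ℝ} {A c s : ℝ}

theorem linearExtension_of_le (h : s ≤ A) : linearExtension f A c s = f s := if_pos h

theorem linearExtension_of_ge (h : A ≤ s) : linearExtension f A c s = f A + c * (s - A) := by
  rcases h.eq_or_lt with rfl | h
  · simp [linearExtension]
  · exact if_neg h.not_ge

theorem linearExtension_monotoneOn (hf : MonotoneOn f (Ici 0)) (hA : 0 ≤ A) (hc : 0 ≤ c) :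
    MonotoneOn (linearExtension f A c) (Ici 0) := by
  rw [← Icc_union_Ici_eq_Ici hA]
  refine MonotoneOn.union_right ?_ ?_ (isGreatest_Icc hA) isLeast_Ici
  · exact (hf.mono Icc_subset_Ici_self).congr fun s hs => (linearExtension_of_le hs.2).symm
  · intro a ha b hb hab
    rw [linearExtension_of_ge ha, linearExtension_of_ge hb]
    gcongr

theorem linearExtension_div_antitoneOn (hf : AntitoneOn (fun s => f s / s) (Ioi 0))
    (hA : 0 < A) (hcA : A * c ≤ f A) :
    AntitoneOn (fun s => linearExtension f A c s / s) (Ioi 0) := by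
  rw [← Ioc_union_Ici_eq_Ioi hA]
  refine AntitoneOn.union_right ?_ ?_ (isGreatest_Ioc hA) isLeast_Ici
  · exact (hf.mono Ioc_subset_Ioi_self).congr fun s hs => by
      simp only [linearExtension_of_le hs.2]
  · intro a ha b hb hab
    have ha0 : 0 < a := hA.trans_le ha
    simp only [linearExtension_of_ge ha, linearExtension_of_ge hb]
    rw [div_le_div_iff₀ (ha0.trans_le hab) ha0]
    nlinarith [mul_nonneg (sub_nonneg.2 hcA) (sub_nonneg.2 hab)]

theorem approxA_integral_eq_integral_linearExtension (hA : 0 ≤ A)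
    (hf : IntervalIntegrable f volume 0 A)
    (hderiv : deriv (fun x => ∫ s in 0..x, f s) A = f A)
    (hderiv2 : deriv (deriv (fun x => ∫ s in 0..x, f s)) A = c) {t : ℝ} (ht : 0 ≤ t) :
    approxA (fun x => ∫ s in 0..x, f s) A t = ∫ s in 0..t, linearExtension f A c s := by
  unfold approxA
  rw [hderiv, hderiv2]
  split_ifs with htA
  · refine intervalIntegral.integral_congr fun s hs => ?_
    rw [uIcc_of_le ht] at hs
    exact (linearExtension_of_le (hs.2.trans htA)).symm
  replace htA : A < t := not_le.mp htA
  have hleft : EqOn f (linearExtension f A c) (uIcc 0 A) := fun s hs =>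
    (linearExtension_of_le (by rw [uIcc_of_le hA] at hs; exact hs.2)).symm
  have hright : EqOn (fun s => f A + c * (s - A)) (linearExtension f A c) (uIcc A t) :=
    fun s hs => (linearExtension_of_ge (by rw [uIcc_of_le htA.le] at hs; exact hs.1)).symm
  have haffine : IntervalIntegrable (fun s => f A + c * (s - A)) volume A t := by
    apply Continuous.intervalIntegrable; fun_prop
  rw [← intervalIntegral.integral_add_adjacent_intervals
      (hf.congr (hleft.mono uIoc_subset_uIcc)) (haffine.congr (hright.mono uIoc_subset_uIcc)),
    ← intervalIntegral.integral_congr hleft, ← intervalIntegral.integral_congr hright,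
    intervalIntegral.integral_comp_sub_right (fun x => f A + c * x),
    intervalIntegral.integral_add intervalIntegrable_const
      (intervalIntegral.intervalIntegrable_id.const_mul c),
    intervalIntegral.integral_const_mul]
  simp
  ring

end LinearExtension

section Omega

variable {p δ x : ℝ}

def omgIntegrand (p δ s : ℝ) : ℝ := (δ + s) ^ (p - 2) * s

theorem omgIntegrand_zero : omgIntegrand p δ 0 = 0 := mul_zero _

theorem omgIntegrand_eq_rpow_mul_div (hδ : 0 ≤ δ) (hx : 0 ≤ x) :
    omgIntegrand p δ x = (δ + x) ^ (p - 1) * (x / (δ + x)) := by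
  rcases (add_nonneg hδ hx).eq_or_lt with h | h
  · obtain rfl : x = 0 := by linarith
    simp [omgIntegrand]
  · rw [omgIntegrand, show p - 2 = p - 1 - 1 by ring, rpow_sub_one h.ne']
    field_simp

theorem omgIntegrand_monotoneOn (hp : 1 ≤ p) (hδ : 0 ≤ δ) :
    MonotoneOn (omgIntegrand p δ) (Ici 0) := by
  have hpow : MonotoneOn (fun s => (δ + s) ^ (p - 1)) (Ici 0) := fun a ha b _ hab =>
    rpow_le_rpow (add_nonneg hδ ha) (by linarith) (by linarith)
  have hfrac : MonotoneOn (fun s => s / (δ + s)) (Ici 0) := by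
    intro a ha b hb hab
    rcases (mem_Ici.mp ha).eq_or_lt with rfl | ha0
    · simpa using div_nonneg hb (add_nonneg hδ hb)
    · rw [div_le_div_iff₀ (by linarith) (by linarith)]
      nlinarith
  refine (hpow.mul hfrac (fun s hs => rpow_nonneg (add_nonneg hδ hs) _)
    (fun s hs => div_nonneg hs (add_nonneg hδ hs))).congr fun s hs => ?_
  exact (omgIntegrand_eq_rpow_mul_div hδ hs).symm

theorem omgIntegrand_div_antitoneOn (hp : p ≤ 2) (hδ : 0 ≤ δ) :
    AntitoneOn (fun s => omgIntegrand p δ s / s) (Ioi 0) := by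
  intro a (ha : 0 < a) b (hb : 0 < b) hab
  simp only [omgIntegrand, mul_div_cancel_right₀ _ ha.ne', mul_div_cancel_right₀ _ hb.ne']
  exact rpow_le_rpow_of_nonpos (by linarith) (by linarith) (by linarith)

theorem omgIntegrand_intervalIntegrable (hp : 1 ≤ p) (hδ : 0 ≤ δ) (hx : 0 ≤ x) :
    IntervalIntegrable (omgIntegrand p δ) volume 0 x :=
  ((omgIntegrand_monotoneOn hp hδ).mono
    (by rw [uIcc_of_le hx]; exact Icc_subset_Ici_self)).intervalIntegrable

theorem omgIntegrand_continuousAt (hx : 0 < δ + x) : ContinuousAt (omgIntegrand p δ) x :=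
  ((continuousAt_const.add continuousAt_id).rpow_const (Or.inl hx.ne')).mul continuousAt_id

theorem hasDerivAt_omgIntegrand (hx : 0 < δ + x) :
    HasDerivAt (omgIntegrand p δ) ((δ + x) ^ (p - 3) * (δ + (p - 1) * x)) x := by
  have hpow : HasDerivAt (fun s => (δ + s) ^ (p - 2)) (1 * (p - 2) * (δ + x) ^ (p - 2 - 1)) x :=
    ((hasDerivAt_id x).const_add δ).rpow_const (Or.inl hx.ne')
  refine (hpow.mul (hasDerivAt_id x)).congr_deriv ?_
  rw [show p - 2 - 1 = p - 3 by ring, show p - 2 = p - 3 + 1 by ring, rpow_add_one hx.ne']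
  simp only [id_eq]
  ring

theorem hasDerivAt_omg (hp : 1 ≤ p) (hδ : 0 ≤ δ) (hx : 0 < x) :
    HasDerivAt (omg p δ) (omgIntegrand p δ x) x := by
  have hcont : ContinuousOn (omgIntegrand p δ) (Ioi 0) := fun y hy =>
    (omgIntegrand_continuousAt (by linarith [mem_Ioi.mp hy])).continuousWithinAt
  exact intervalIntegral.integral_hasDerivAt_right (omgIntegrand_intervalIntegrable hp hδ hx.le)
    (hcont.stronglyMeasurableAtFilter isOpen_Ioi x hx) (omgIntegrand_continuousAt (by linarith))

theorem deriv_deriv_omg_s3 (hp : 1 ≤ p) (hδ : 0 ≤ δ) (hx : 0 < x) :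
    deriv (deriv (omg p δ)) x = (δ + x) ^ (p - 3) * (δ + (p - 1) * x) := by
  have hderiv : deriv (omg p δ) =ᶠ[nhds x] omgIntegrand p δ := by
    filter_upwards [Ioi_mem_nhds hx] with y hy using (hasDerivAt_omg hp hδ hy).deriv
  rw [hderiv.deriv_eq, (hasDerivAt_omgIntegrand (by linarith)).deriv]

theorem deriv_deriv_omg_nonneg (hp : 1 ≤ p) (hδ : 0 ≤ δ) (hx : 0 < x) :
    0 ≤ deriv (deriv (omg p δ)) x := by
  rw [deriv_deriv_omg_s3 hp hδ hx]
  exact mul_nonneg (rpow_nonneg (by linarith) _) (by nlinarith)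

theorem mul_deriv_deriv_omg_le (hp₁ : 1 ≤ p) (hp₂ : p ≤ 2) (hδ : 0 ≤ δ) (hx : 0 < x) :
    x * deriv (deriv (omg p δ)) x ≤ omgIntegrand p δ x := by
  have hδx : 0 < δ + x := by linarith
  rw [deriv_deriv_omg_s3 hp₁ hδ hx, omgIntegrand, show p - 2 = p - 3 + 1 by ring,
    rpow_add_one hδx.ne']
  have hpow : 0 ≤ (δ + x) ^ (p - 3) := rpow_nonneg hδx.le _
  nlinarith [mul_nonneg (mul_nonneg hpow (mul_nonneg hx.le hx.le)) (sub_nonneg.2 hp₂)]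

end Omega

/-- For `p ∈ (1,2]`, `δ ∈ [0,∞)` and `A ≥ 1`, `ω = ω_{p,δ}` satisfies
`ω(λt) ≤ max{λ, λ²} ω(t)` and `ω^A(λt) ≤ max{λ, λ²} ω^A(t)` for all `λ, t ≥ 0`. -/
theorem stmt3 (p δ A : ℝ) (hp : p ∈ Set.Ioc (1:ℝ) 2) (hδ : 0 ≤ δ) (hA : 1 ≤ A) :
    ∀ lam t : ℝ, 0 ≤ lam → 0 ≤ t →
      omg p δ (lam * t) ≤ max lam (lam ^ 2) * omg p δ t ∧
      approxA (omg p δ) A (lam * t) ≤ max lam (lam ^ 2) * approxA (omg p δ) A t := by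
  obtain ⟨hp₁, hp₂⟩ := hp
  intro lam t hlam ht
  have hA₀ : 0 < A := by linarith
  have hmono := omgIntegrand_monotoneOn hp₁.le hδ
  have hratio := omgIntegrand_div_antitoneOn hp₂ hδ
  refine ⟨integral_mul_le_max_mul_integral hmono hratio omgIntegrand_zero.ge hlam ht, ?_⟩
  have hrepr (s : ℝ) (hs : 0 ≤ s) : approxA (omg p δ) A s =
      ∫ x in 0..s, linearExtension (omgIntegrand p δ) A (deriv (deriv (omg p δ)) A) x :=
    approxA_integral_eq_integral_linearExtension hA₀.le
      (omgIntegrand_intervalIntegrable hp₁.le hδ hA₀.le) (hasDerivAt_omg hp₁.le hδ hA₀).deriv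
      rfl hs
  rw [hrepr _ (mul_nonneg hlam ht), hrepr t ht]
  refine integral_mul_le_max_mul_integral
    (linearExtension_monotoneOn hmono hA₀.le (deriv_deriv_omg_nonneg hp₁.le hδ hA₀))
    (linearExtension_div_antitoneOn hratio hA₀ (mul_deriv_deriv_omg_le hp₁.le hp₂ hδ hA₀))
    ?_ hlam ht
  rw [linearExtension_of_le hA₀.le, omgIntegrand_zero]
end
end
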